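/- arXiv:2306.01462 — 3 statements merged into one kernel-verified Lean document; each statement's English description precedes it below -/
import Mathlib

section
/- For every real number x, ∑_{k=0}^∞ a_{2k} · x^{2k}/(2k)! = (1/2) ∫₀^∞ (g(x·t)³ + g(−x·t)³) · e^{−t} dt. -/
/-!
Multiplying out the cube of the series of `g` gives `g(y)³ = ∑ aₙ yⁿ / (n!)²`. Since
`∫₀^∞ tⁿ e^{-t} dt = n!`, integrating `g(xt)³ + g(-xt)³` against `e^{-t}` term by term turns this
into `∑ aₙ (1 + (-1)ⁿ) xⁿ / n!`, whose odd terms vanish. The termwise integration is justified by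
`aₙ ≤ 9ⁿ`, which makes `∑ aₙ |x|ⁿ / n!` converge.
-/

open MeasureTheory Real

/-- `a k` is the sum of squared multinomial coefficients over all triples
`(k₁,k₂,k₃)` of natural numbers with `k₁+k₂+k₃ = k`. -/
def a (k : ℕ) : ℕ :=
  ∑ p ∈ Finset.Nat.antidiagonalTuple 3 k, (Nat.multinomial Finset.univ p) ^ 2

/-- The entire function `g(y) = ∑ y^k/(k!)²`, so that `g(y) = I₀(2√y)` for `y ≥ 0`. -/
noncomputable def g (y : ℝ) : ℝ := ∑' k : ℕ, y ^ k / ((Nat.factorial k : ℝ)) ^ 2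

open Finset Nat

theorem Finset.Nat.sum_antidiagonalTuple_succ {M : Type*} [AddCommMonoid M] (k n : ℕ)
    (f : (Fin (k + 1) → ℕ) → M) :
    ∑ p ∈ antidiagonalTuple (k + 1) n, f p
      = ∑ ij ∈ antidiagonal n, ∑ q ∈ antidiagonalTuple k ij.2, f (Fin.cons ij.1 q) := by
  change (((List.Nat.antidiagonal n).flatMap fun ij =>
      (List.Nat.antidiagonalTuple k ij.2).map (Fin.cons ij.1)).map f).sum =
    ((List.Nat.antidiagonal n).map fun ij =>
      ((List.Nat.antidiagonalTuple k ij.2).map fun q => f (Fin.cons ij.1 q)).sum).sum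
  simp [List.flatMap, List.sum_flatten, List.map_flatten, Function.comp_def]

theorem Finset.Nat.sum_antidiagonalTuple_succ_prod {R : Type*} [CommSemiring R] (f : ℕ → R)
    (k n : ℕ) :
    ∑ p ∈ antidiagonalTuple (k + 1) n, ∏ i, f (p i)
      = ∑ ij ∈ antidiagonal n, f ij.1 * ∑ q ∈ antidiagonalTuple k ij.2, ∏ i, f (q i) := by
  simp [sum_antidiagonalTuple_succ, Fin.prod_univ_succ, mul_sum]

theorem Finset.Nat.sum_antidiagonalTuple_multinomial (k n : ℕ) :
    ∑ p ∈ antidiagonalTuple k n, multinomial univ p = k ^ n := by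
  simpa [← piAntidiag_univ_fin_eq_antidiagonalTuple] using
    (sum_pow_eq_sum_piAntidiag (univ : Finset (Fin k)) (fun _ => (1 : ℕ)) n).symm

theorem Finset.Nat.sum_antidiagonalTuple_multinomial_sq_le (k n : ℕ) :
    ∑ p ∈ antidiagonalTuple k n, multinomial univ p ^ 2 ≤ (k ^ 2) ^ n :=
  calc _ ≤ (∑ p ∈ antidiagonalTuple k n, multinomial univ p) ^ 2 :=
        sum_sq_le_sq_sum_of_nonneg fun _ _ => Nat.zero_le _
    _ = (k ^ 2) ^ n := by rw [sum_antidiagonalTuple_multinomial, ← pow_mul, mul_comm, pow_mul]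

theorem a_le_nine_pow (n : ℕ) : a n ≤ 9 ^ n :=
  sum_antidiagonalTuple_multinomial_sq_le 3 n

theorem hasSum_sum_antidiagonalTuple_prod {R : Type*} [NormedCommRing R] [CompleteSpace R]
    {f : ℕ → R} (hf : Summable fun n => ‖f n‖) (k : ℕ) :
    Summable (fun n => ‖∑ p ∈ antidiagonalTuple k n, ∏ i, f (p i)‖) ∧
      HasSum (fun n => ∑ p ∈ antidiagonalTuple k n, ∏ i, f (p i)) ((∑' n, f n) ^ k) := by
  induction k with
  | zero =>
    have h (n : ℕ) :
        ∑ p ∈ antidiagonalTuple 0 n, ∏ i, f (p i) = Pi.single (M := fun _ => R) 0 1 n := by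
      cases n <;> simp
    simp only [h, pow_zero]
    exact ⟨summable_of_ne_finset_zero (s := {0}) fun n hn => by simp_all,
      hasSum_pi_single 0 1⟩
  | succ k ih =>
    simp_rw [sum_antidiagonalTuple_succ_prod]
    have hsum := summable_norm_sum_mul_antidiagonal_of_summable_norm hf ih.1
    refine ⟨hsum, ?_⟩
    rw [_root_.pow_succ', ← ih.2.tsum_eq,
      tsum_mul_tsum_eq_tsum_sum_antidiagonal_of_summable_norm hf ih.1]
    exact hsum.of_norm.hasSum

theorem summable_norm_pow_div_factorial_sq (y : ℝ) :
    Summable fun n => ‖y ^ n / (n ! : ℝ) ^ 2‖ := by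
  refine .of_nonneg_of_le (fun _ => norm_nonneg _) (fun n => ?_) (summable_pow_div_factorial |y|)
  rw [norm_div, norm_pow, norm_pow, norm_natCast, Real.norm_eq_abs]
  gcongr
  exact le_self_pow₀ (mod_cast factorial_pos n) two_ne_zero

theorem sum_antidiagonalTuple_prod_pow_div_factorial_sq (k n : ℕ) (y : ℝ) :
    ∑ p ∈ antidiagonalTuple k n, ∏ i, y ^ p i / ((p i)! : ℝ) ^ 2
      = (∑ p ∈ antidiagonalTuple k n, multinomial univ p ^ 2 : ℕ) / (n ! : ℝ) ^ 2 * y ^ n := by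
  push_cast
  rw [sum_div, sum_mul]
  refine sum_congr rfl fun p hp => ?_
  have hsum : ∑ i, p i = n := mem_antidiagonalTuple.1 hp
  have hfact : (n ! : ℝ) = (∏ i, ((p i)! : ℝ)) * multinomial univ p := by
    rw [← hsum]; exact_mod_cast (multinomial_spec univ p).symm
  have : (multinomial univ p : ℝ) ≠ 0 := mod_cast (multinomial_pos univ p).ne'
  rw [prod_div_distrib, prod_pow_eq_pow_sum, hsum, hfact, prod_pow]
  field_simp

theorem hasSum_a_div_factorial_sq_mul_pow (y : ℝ) :
    HasSum (fun n => (a n : ℝ) / (n ! : ℝ) ^ 2 * y ^ n) (g y ^ 3) := by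
  have h := (hasSum_sum_antidiagonalTuple_prod (summable_norm_pow_div_factorial_sq y) 3).2
  simp only [sum_antidiagonalTuple_prod_pow_div_factorial_sq] at h
  exact h

theorem integrableOn_pow_mul_exp_neg_Ioi (n : ℕ) :
    IntegrableOn (fun t : ℝ => t ^ n * exp (-t)) (Set.Ioi 0) := by
  refine (GammaIntegral_convergent (s := n + 1) (by positivity)).congr_fun (fun t _ => ?_)
    measurableSet_Ioi
  simp [← rpow_natCast, mul_comm]

theorem integral_pow_mul_exp_neg_Ioi (n : ℕ) :
    ∫ t in Set.Ioi (0 : ℝ), t ^ n * exp (-t) = n ! := by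
  rw [← Gamma_nat_eq_factorial, Gamma_eq_integral (by positivity)]
  simp [← rpow_natCast, mul_comm]

theorem hasSum_integral_comp_mul_mul_exp_neg {b : ℕ → ℝ} {f : ℝ → ℝ} (x : ℝ)
    (hf : ∀ y, HasSum (fun n => b n * y ^ n) (f y))
    (hb : Summable fun n => ‖b n * n ! * x ^ n‖) :
    HasSum (fun n => b n * n ! * x ^ n) (∫ t in Set.Ioi 0, f (x * t) * exp (-t)) := by
  set F : ℕ → ℝ → ℝ := fun n t => b n * x ^ n * (t ^ n * exp (-t))
  have hF_integral (n : ℕ) : ∫ t in Set.Ioi 0, F n t = b n * n ! * x ^ n := by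
    simp only [F, integral_const_mul, integral_pow_mul_exp_neg_Ioi]
    ring
  have hF_norm (n : ℕ) : ∫ t in Set.Ioi 0, ‖F n t‖ = ‖b n * n ! * x ^ n‖ := by
    calc ∫ t in Set.Ioi 0, ‖F n t‖ = ∫ t in Set.Ioi 0, ‖b n * x ^ n‖ * (t ^ n * exp (-t)) := by
          refine setIntegral_congr_fun measurableSet_Ioi fun t (ht : 0 < t) => ?_
          rw [norm_mul, norm_of_nonneg (by positivity : 0 ≤ t ^ n * exp (-t))]
      _ = ‖b n * n ! * x ^ n‖ := by
          rw [integral_const_mul, integral_pow_mul_exp_neg_Ioi, norm_mul, norm_mul, norm_mul,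
            Real.norm_natCast]
          ring
  have hsum := hasSum_integral_of_summable_integral_norm (F := F)
    (fun n => (integrableOn_pow_mul_exp_neg_Ioi n).const_mul (b n * x ^ n))
    (by simpa only [hF_norm] using hb)
  simp only [hF_integral] at hsum
  have hF_tsum (t : ℝ) : ∑' n, F n t = f (x * t) * exp (-t) :=
    (((hf (x * t)).mul_right (exp (-t))).congr_fun fun n => by simp only [F]; ring).tsum_eq
  simpa only [hF_tsum] using hsum

theorem HasSum.comp_two_mul_of_odd_eq_zero {α : Type*} [AddCommMonoid α] [TopologicalSpace α]
    {f : ℕ → α} {s : α} (hf : HasSum f s) (hodd : ∀ n, Odd n → f n = 0) :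
    HasSum (fun k => f (2 * k)) s := by
  refine (Function.Injective.hasSum_iff (mul_right_injective₀ two_ne_zero) fun n hn => ?_).2 hf
  refine hodd n (Nat.not_even_iff_odd.1 fun ⟨k, hk⟩ => hn ⟨k, ?_⟩)
  simp [hk, two_mul]

theorem norm_a_div_factorial_sq_mul_one_add_neg_one_pow_le (n : ℕ) (x : ℝ) :
    ‖(a n : ℝ) / (n ! : ℝ) ^ 2 * (1 + (-1) ^ n) * n ! * x ^ n‖ ≤ 2 * ((9 * |x|) ^ n / n !) := by
  have hfac : (n ! : ℝ) ≠ 0 := by positivity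
  have hsign : |1 + (-1 : ℝ) ^ n| ≤ 2 := (abs_add_le _ _).trans (by simp [one_add_one_eq_two])
  have ha : (a n : ℝ) ≤ 9 ^ n := mod_cast a_le_nine_pow n
  calc ‖(a n : ℝ) / (n ! : ℝ) ^ 2 * (1 + (-1) ^ n) * n ! * x ^ n‖
      = a n * |1 + (-1 : ℝ) ^ n| * |x| ^ n / n ! := by
        rw [Real.norm_eq_abs, show (a n : ℝ) / (n ! : ℝ) ^ 2 * (1 + (-1) ^ n) * n ! * x ^ n
          = a n * (1 + (-1) ^ n) * x ^ n / (n ! : ℝ) by field_simp]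
        simp [abs_mul, abs_div, abs_pow]
    _ ≤ 9 ^ n * 2 * |x| ^ n / n ! := by gcongr
    _ = 2 * ((9 * |x|) ^ n / n !) := by ring

/-- Even-index exponential generating function of `a`. -/
theorem egf_a_even_eq_integral (x : ℝ) :
    HasSum (fun k : ℕ => (a (2 * k) : ℝ) * x ^ (2 * k) / (Nat.factorial (2 * k) : ℝ))
      ((1 / 2) * ∫ t in Set.Ioi (0:ℝ),
        (g (x * t) ^ 3 + g (-(x * t)) ^ 3) * Real.exp (-t)) := by
  set b : ℕ → ℝ := fun n => (a n : ℝ) / (n ! : ℝ) ^ 2 * (1 + (-1) ^ n)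
  have hb (y : ℝ) : HasSum (fun n => b n * y ^ n) (g y ^ 3 + g (-y) ^ 3) :=
    ((hasSum_a_div_factorial_sq_mul_pow y).add (hasSum_a_div_factorial_sq_mul_pow (-y))).congr_fun
      fun n => by simp only [b, neg_pow y]; ring
  have hsummable : Summable fun n => ‖b n * n ! * x ^ n‖ :=
    .of_nonneg_of_le (fun _ => norm_nonneg _)
      (norm_a_div_factorial_sq_mul_one_add_neg_one_pow_le · x)
      ((summable_pow_div_factorial _).mul_left 2)
  have heven := (hasSum_integral_comp_mul_mul_exp_neg x hb hsummable).comp_two_mul_of_odd_eq_zero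
    fun n hn => by simp [b, hn.neg_one_pow]
  refine (heven.mul_left (1 / 2)).congr_fun fun k => ?_
  have hfac : ((2 * k)! : ℝ) ≠ 0 := by positivity
  simp only [b, (even_two_mul k).neg_one_pow]
  field_simp
  ring
end

section
/- Let β > 0 be irrational. Then cos(X_b) + cos(βX_b) + cos((1+β)X_b), with X_b uniformly distributed on [0,b], converges in distribution as b → ∞ to cos(U₁) + cos(U₂) + cos(U₁+U₂), where U₁, U₂ are independent and uniformly distributed on [0,2π]; i.e., for every bounded continuous function f : ℝ → ℝ, (1/b)∫₀^b f(cos x + cos(βx) + cos((1+β)x)) dx → (1/(2π)²)∫₀^{2π}∫₀^{2π} f(cos u + cos v + cos(u+v)) du dv as b → ∞. (Equivalently, the limit law is that of cos(U₁−U₃) + cos(U₃−U₂) + cos(U₂−U₁) for any U₃ independent of U₁,U₂.) -/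
/-!
The map `x ↦ (x, βx)` winds the line around the torus `(ℝ / 2πℤ)²`, and the integrand is a
continuous function of the point reached, namely `(u, v) ↦ f (cos u + cos v + cos (u + v))`. So
the theorem is Weyl's equidistribution theorem for the linear flow of direction `(1, β)`. Time
averages and the Haar mean are uniformly bounded linear functionals of the observable, so it
suffices to check their convergence on the dense span of the characters `exp (i (n₁u + n₂v))`.
Along the flow such a character is `t ↦ exp (i (n₁ + n₂β) t)`, whose time averages tend to `0`
unless `n₁ + n₂β = 0`, which for irrational `β` means `n = 0`; and `0` is also its Haar mean.
-/

open Filter Topology MeasureTheory Set Real Complex ProbabilityTheory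

namespace MeasureTheory

variable {X : Type*} [TopologicalSpace X] [CompactSpace X] [MeasurableSpace X]
  [OpensMeasurableSpace X] {𝕜 : Type*} [RCLike 𝕜]

theorem lipschitzWith_one_integral_continuousMap (μ : Measure X) [IsZeroOrProbabilityMeasure μ] :
    LipschitzWith 1 fun g : C(X, 𝕜) => ∫ x, g x ∂μ := by
  refine LipschitzWith.of_dist_le_mul fun g h => ?_
  have hint (k : C(X, 𝕜)) : Integrable k μ :=
    k.continuous.integrable_of_hasCompactSupport (HasCompactSupport.of_compactSpace _)
  rw [dist_eq_norm, dist_eq_norm, ← integral_sub (hint g) (hint h), NNReal.coe_one, one_mul]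
  calc ‖∫ x, (g x - h x) ∂μ‖ ≤ ‖g - h‖ * μ.real univ :=
        norm_integral_le_of_norm_le_const (.of_forall fun x => (g - h).norm_coe_le_norm x)
    _ ≤ ‖g - h‖ := mul_le_of_le_one_right (norm_nonneg _) measureReal_le_one

theorem tendsto_integral_of_topologicalClosure_span_eq_top {ι : Type*} {l : Filter ι}
    {μ : ι → Measure X} [∀ i, IsZeroOrProbabilityMeasure (μ i)]
    {ν : Measure X} [IsZeroOrProbabilityMeasure ν] {s : Set C(X, 𝕜)}
    (hs : (Submodule.span 𝕜 s).topologicalClosure = ⊤)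
    (h : ∀ g ∈ s, Tendsto (fun i => ∫ x, g x ∂μ i) l (𝓝 (∫ x, g x ∂ν))) (g : C(X, 𝕜)) :
    Tendsto (fun i => ∫ x, g x ∂μ i) l (𝓝 (∫ x, g x ∂ν)) := by
  have hint {m : Measure X} [IsZeroOrProbabilityMeasure m] (k : C(X, 𝕜)) : Integrable k m :=
    k.continuous.integrable_of_hasCompactSupport (HasCompactSupport.of_compactSpace _)
  let S : Submodule 𝕜 C(X, 𝕜) :=
    { carrier := {g | Tendsto (fun i => ∫ x, g x ∂μ i) l (𝓝 (∫ x, g x ∂ν))}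
      add_mem' := fun {g k} hg hk => by
        simpa only [mem_ofPred_eq, ContinuousMap.add_apply, integral_add (hint g) (hint k)]
          using hg.add hk
      zero_mem' := by simpa using tendsto_const_nhds
      smul_mem' := fun c g hg => by
        simpa only [mem_ofPred_eq, ContinuousMap.smul_apply, integral_smul] using hg.const_smul c }
  have hS : IsClosed (S : Set C(X, 𝕜)) :=
    (LipschitzWith.uniformEquicontinuous _ 1 fun i =>
      lipschitzWith_one_integral_continuousMap (μ i)).equicontinuous.isClosed_setOfPred_tendsto
      (lipschitzWith_one_integral_continuousMap ν).continuous
  have : (⊤ : Submodule 𝕜 C(X, 𝕜)) ≤ S :=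
    hs ▸ Submodule.topologicalClosure_minimal _ (Submodule.span_le.mpr h) hS
  exact this trivial

end MeasureTheory

theorem ProbabilityTheory.integral_cond_Ioc {E : Type*} [NormedAddCommGroup E] [NormedSpace ℝ E]
    (f : ℝ → E) {a b : ℝ} (hab : a ≤ b) :
    ∫ t, f t ∂(volume[|Ioc a b]) = (b - a)⁻¹ • ∫ t in a..b, f t := by
  rw [cond, integral_smul_measure, intervalIntegral.integral_of_le hab, Real.volume_Ioc,
    ENNReal.toReal_inv, ENNReal.toReal_ofReal (sub_nonneg.mpr hab)]

theorem tendsto_average_cexp_mul_I {c : ℝ} (hc : c ≠ 0) :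
    Tendsto (fun s : ℝ => s⁻¹ • ∫ t in (0:ℝ)..s, cexp (c * I * t)) atTop (𝓝 0) := by
  have hcI : (c : ℂ) * I ≠ 0 := mul_ne_zero (ofReal_ne_zero.mpr hc) I_ne_zero
  have hint (s : ℝ) : ‖∫ t in (0:ℝ)..s, cexp (c * I * t)‖ ≤ 2 / |c| := by
    rw [integral_exp_mul_complex hcI, ofReal_zero, mul_zero, Complex.exp_zero, norm_div,
      norm_mul, norm_I, mul_one, norm_real, Real.norm_eq_abs]
    gcongr
    calc ‖cexp (c * I * s) - 1‖ ≤ ‖cexp (c * I * s)‖ + ‖(1 : ℂ)‖ := norm_sub_le _ _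
      _ = 2 := by rw [mul_right_comm, ← ofReal_mul, norm_exp_ofReal_mul_I, norm_one]; norm_num
  have hlim : Tendsto (fun s : ℝ => s⁻¹ * (2 / |c|)) atTop (𝓝 0) := by
    simpa using tendsto_inv_atTop_zero.mul_const (2 / |c|)
  refine squeeze_zero_norm' ?_ hlim
  filter_upwards [eventually_gt_atTop 0] with s hs
  rw [norm_smul, Real.norm_of_nonneg (inv_nonneg.mpr hs.le)]
  exact mul_le_mul_of_nonneg_left (hint s) (inv_nonneg.mpr hs.le)

theorem intervalIntegral.integral_integral_comp_mul_left {E : Type*} [NormedAddCommGroup E]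
    [NormedSpace ℝ E] (H : ℝ → ℝ → E) {c : ℝ} (hc : c ≠ 0) (a b a' b' : ℝ) :
    ∫ u in a..b, ∫ v in a'..b', H (c * u) (c * v) =
      (c ^ 2)⁻¹ • ∫ u in c * a..c * b, ∫ v in c * a'..c * b', H u v := by
  simp only [integral_comp_mul_left (H _) hc, integral_smul]
  rw [integral_comp_mul_left (fun u => ∫ v in c * a'..c * b', H u v) hc, smul_smul, pow_two,
    mul_inv]

instance : IsProbabilityMeasure (volume : Measure UnitAddCircle) :=
  ⟨by simp [AddCircle.measure_univ]⟩

theorem AddCircle.integral_fourier_of_ne_zero {T : ℝ} [hT : Fact (0 < T)] {n : ℤ} (hn : n ≠ 0) :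
    ∫ x : AddCircle T, fourier n x = 0 := by
  have h := integral_add_right_eq_self (μ := volume) (fun x : AddCircle T => (fourier n x : ℂ))
    ((T / 2 / n : ℝ) : AddCircle T)
  simp only [fourier_add_half_inv_index hn hT.out, integral_neg] at h
  exact neg_eq_self.mp h

namespace UnitAddTorus

variable {d : Type*}

theorem integral_mFourier [Fintype d] (n : d → ℤ) :
    ∫ x, mFourier n x = if n = 0 then 1 else 0 := by
  split_ifs with hn
  · simp [hn, mFourier_zero]
  · obtain ⟨i, hi⟩ := Function.ne_iff.mp hn
    simp only [mFourier, ContinuousMap.coe_mk]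
    rw [volume_pi,
      integral_fintype_prod_eq_prod (fun i (y : UnitAddCircle) => (fourier (n i) y : ℂ))]
    exact Finset.prod_eq_zero (Finset.mem_univ i) (AddCircle.integral_fourier_of_ne_zero hi)

theorem integral_fin_two {E : Type*} [NormedAddCommGroup E] [NormedSpace ℝ E]
    (g : C(UnitAddTorus (Fin 2), E)) :
    ∫ x, g x = ∫ u in (0:ℝ)..1, ∫ v in (0:ℝ)..1, g ![u, v] := by
  let e := MeasurableEquiv.finTwoArrow (α := UnitAddCircle)
  have hg : Integrable (fun p => g (e.symm p)) (volume.prod volume) := by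
    refine Continuous.integrable_of_hasCompactSupport ?_ (HasCompactSupport.of_compactSpace _)
    exact g.continuous.comp
      (continuous_pi (Fin.forall_fin_two.mpr ⟨continuous_fst, continuous_snd⟩))
  rw [← ((volume_preserving_finTwoArrow UnitAddCircle).symm e).integral_comp',
    Measure.volume_eq_prod, integral_prod _ hg]
  simp_rw [← UnitAddCircle.intervalIntegral_preimage 0, zero_add]
  rfl

def linearFlow (v : d → ℝ) (t : ℝ) : UnitAddTorus d := fun i => ((t * v i : ℝ) : UnitAddCircle)

theorem continuous_linearFlow (v : d → ℝ) : Continuous (linearFlow v) := by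
  unfold linearFlow; fun_prop

theorem mFourier_linearFlow [Fintype d] (n : d → ℤ) (v : d → ℝ) (t : ℝ) :
    mFourier n (linearFlow v t) = cexp ((2 * π * ∑ i, n i * v i : ℝ) * I * t) := by
  simp only [mFourier, linearFlow, ContinuousMap.coe_mk, fourier_coe_apply, ← Complex.exp_sum]
  congr 1
  push_cast
  rw [Finset.mul_sum, Finset.sum_mul, Finset.sum_mul]
  refine Finset.sum_congr rfl fun i _ => ?_
  ring

variable [Fintype d] {v : d → ℝ}

theorem tendsto_average_linearFlow (hv : ∀ n : d → ℤ, n ≠ 0 → ∑ i, n i * v i ≠ 0)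
    (g : C(UnitAddTorus d, ℂ)) :
    Tendsto (fun s : ℝ => s⁻¹ • ∫ t in (0:ℝ)..s, g (linearFlow v t)) atTop (𝓝 (∫ x, g x)) := by
  let μ (s : ℝ) : Measure (UnitAddTorus d) := (volume[|Ioc 0 s]).map (linearFlow v)
  have hμ (h : C(UnitAddTorus d, ℂ)) : (fun s => ∫ x, h x ∂μ s) =ᶠ[atTop]
      fun s => s⁻¹ • ∫ t in (0:ℝ)..s, h (linearFlow v t) := by
    filter_upwards [eventually_ge_atTop 0] with s hs
    rw [integral_map (continuous_linearFlow v).aemeasurable h.continuous.aestronglyMeasurable,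
      integral_cond_Ioc _ hs, sub_zero]
  refine Tendsto.congr' (hμ g) ?_
  refine tendsto_integral_of_topologicalClosure_span_eq_top span_mFourier_closure_eq_top ?_ g
  rintro _ ⟨n, rfl⟩
  refine Tendsto.congr' (hμ _).symm ?_
  simp_rw [mFourier_linearFlow, integral_mFourier]
  split_ifs with hn
  · subst hn
    refine tendsto_const_nhds.congr' ?_
    filter_upwards [eventually_gt_atTop 0] with s hs
    simp [hs.ne']
  · exact tendsto_average_cexp_mul_I (mul_ne_zero (by positivity) (hv n hn))

theorem tendsto_average_linearFlow_real (hv : ∀ n : d → ℤ, n ≠ 0 → ∑ i, n i * v i ≠ 0)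
    (g : C(UnitAddTorus d, ℝ)) :
    Tendsto (fun s : ℝ => s⁻¹ * ∫ t in (0:ℝ)..s, g (linearFlow v t)) atTop (𝓝 (∫ x, g x)) := by
  rw [← tendsto_ofReal_iff]
  have := tendsto_average_linearFlow hv ((⟨((↑) : ℝ → ℂ), continuous_ofReal⟩ : C(ℝ, ℂ)).comp g)
  simpa only [ContinuousMap.comp_apply, ContinuousMap.coe_mk, integral_complex_ofReal,
    intervalIntegral.integral_ofReal, real_smul, ofReal_mul, ofReal_inv] using this

end UnitAddTorus

theorem Irrational.intCast_add_intCast_mul_ne_zero {β : ℝ} (hβ : Irrational β) {m n : ℤ}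
    (h : m ≠ 0 ∨ n ≠ 0) : (m : ℝ) + n * β ≠ 0 := by
  rcases eq_or_ne n 0 with rfl | hn
  · simpa using h
  · exact ((hβ.intCast_mul hn).intCast_add m).ne_zero

noncomputable def UnitAddCircle.cosTwoPi : C(UnitAddCircle, ℝ) :=
  ⟨fun y => (fourier 1 y : ℂ).re, by fun_prop⟩

theorem UnitAddCircle.cosTwoPi_coe (u : ℝ) : cosTwoPi u = Real.cos (2 * π * u) := by
  rw [cosTwoPi, ContinuousMap.coe_mk, fourier_coe_apply,
    show 2 * π * I * ((1 : ℤ) : ℂ) * u / (1 : ℝ) = ((2 * π * u : ℝ) : ℂ) * I by push_cast; ring,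
    exp_ofReal_mul_I_re]

namespace UnitAddTorus

open UnitAddCircle

noncomputable def threeCosines : C(UnitAddTorus (Fin 2), ℝ) :=
  ⟨fun x => cosTwoPi (x 0) + cosTwoPi (x 1) + cosTwoPi (x 0 + x 1), by fun_prop⟩

theorem threeCosines_linearFlow (β t : ℝ) :
    threeCosines (linearFlow ![1, β] t) =
      Real.cos (2 * π * t) + Real.cos (β * (2 * π * t)) + Real.cos ((1 + β) * (2 * π * t)) := by
  simp only [threeCosines, linearFlow, ContinuousMap.coe_mk, Matrix.cons_val_zero,
    Matrix.cons_val_one, ← AddCircle.coe_add, cosTwoPi_coe]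
  ring_nf

theorem integral_comp_threeCosines (F : C(ℝ, ℝ)) :
    ∫ x, F (threeCosines x) = 1 / (2 * π) ^ 2 * ∫ u in (0:ℝ)..(2 * π), ∫ v in (0:ℝ)..(2 * π),
      F (Real.cos u + Real.cos v + Real.cos (u + v)) := by
  refine (integral_fin_two (F.comp threeCosines)).trans ?_
  simp only [ContinuousMap.comp_apply, threeCosines, ContinuousMap.coe_mk, Matrix.cons_val_zero,
    Matrix.cons_val_one, ← AddCircle.coe_add, cosTwoPi_coe, mul_add]
  rw [intervalIntegral.integral_integral_comp_mul_left
    (fun u v => F (Real.cos u + Real.cos v + Real.cos (u + v))) two_pi_pos.ne']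
  simp [div_eq_inv_mul]

end UnitAddTorus

theorem inv_mul_integral_comp_mul_left (F : ℝ → ℝ) {b c : ℝ} (hc : c ≠ 0) :
    (b / c)⁻¹ * ∫ t in (0:ℝ)..b / c, F (c * t) = 1 / b * ∫ x in (0:ℝ)..b, F x := by
  rw [intervalIntegral.integral_comp_mul_left F hc, mul_zero, mul_div_cancel₀ _ hc, smul_eq_mul,
    ← mul_assoc, inv_div, div_mul_eq_mul_div, mul_inv_cancel₀ hc]

open UnitAddTorus in
theorem sum_three_cosines_converges_in_distribution_general
    (β : ℝ) (hβirr : Irrational β)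
    (f : ℝ → ℝ) (hf : Continuous f) :
    Tendsto (fun b : ℝ =>
        (1 / b) * ∫ x in (0:ℝ)..b,
          f (Real.cos x + Real.cos (β * x) + Real.cos ((1 + β) * x)))
      atTop
      (nhds ((1 / (2 * π) ^ 2) *
        ∫ u in (0:ℝ)..(2 * π), ∫ v in (0:ℝ)..(2 * π),
          f (Real.cos u + Real.cos v + Real.cos (u + v)))) := by
  have hv (n : Fin 2 → ℤ) (hn : n ≠ 0) : ∑ i, n i * ![1, β] i ≠ 0 := by
    simpa using hβirr.intCast_add_intCast_mul_ne_zero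
      (by simpa [funext_iff, Fin.forall_fin_two, or_iff_not_imp_left] using hn)
  let F : C(ℝ, ℝ) := ⟨f, hf⟩
  -- `UnitAddTorus` has period `1`, so time `x` on the `2π`-torus is time `x / (2π)` on it.
  have hweyl := (tendsto_average_linearFlow_real hv (F.comp threeCosines)).comp
    (tendsto_id.atTop_div_const two_pi_pos)
  simp only [ContinuousMap.comp_apply, integral_comp_threeCosines] at hweyl
  refine hweyl.congr fun b => ?_
  simp only [Function.comp_apply, id, threeCosines_linearFlow]
  exact inv_mul_integral_comp_mul_left
    (fun x => f (Real.cos x + Real.cos (β * x) + Real.cos ((1 + β) * x))) two_pi_pos.ne'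

/-- `cos(X_b)+cos(βX_b)+cos((1+β)X_b)` with `X_b` uniform on `[0,b]` converges in
distribution, as `b → ∞`, to `cos U₁ + cos U₂ + cos(U₁+U₂)` with `U₁,U₂` independent
uniform on `[0,2π]`, for irrational `β > 0`. -/
theorem sum_three_cosines_converges_in_distribution
    (β : ℝ) (hβpos : 0 < β) (hβirr : Irrational β)
    (f : ℝ → ℝ) (hf : Continuous f) (hbdd : ∃ C : ℝ, ∀ y : ℝ, |f y| ≤ C) :
    Tendsto (fun b : ℝ =>
        (1 / b) * ∫ x in (0:ℝ)..b,
          f (Real.cos x + Real.cos (β * x) + Real.cos ((1 + β) * x)))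
      atTop
      (nhds ((1 / (2 * π) ^ 2) *
        ∫ u in (0:ℝ)..(2 * π), ∫ v in (0:ℝ)..(2 * π),
          f (Real.cos u + Real.cos v + Real.cos (u + v)))) :=
  sum_three_cosines_converges_in_distribution_general β hβirr f hf
end

section
/- For every real number x, ∑_{k=0}^∞ a_k · x^{2k+1}/(2k+1)! = x · ∫₀¹ g(x²·t·(1−t))³ dt; equivalently, the moment generating function ∑_k a_k x^{2k}/(2k)! of the random eigenvalue H of graphene equals d/dx [ x ∫₀¹ I₀³(2x√(t(1−t))) dt ]. -/
/-!
Cubing `g(y) = ∑ y^k/(k!)²` as a Cauchy product of three series, the coefficient of `y^k/(k!)²`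
is `∑_{k₁+k₂+k₃=k} (k!/(k₁!k₂!k₃!))² = a_k`. Putting `y = x²t(1−t)` and integrating termwise over
`[0,1]` (the terms are dominated by their values at `t = 1/2`), the Beta integral
`∫₀¹ t^k(1−t)^k dt = (k!)²/(2k+1)!` turns `a_k x^{2k}/(k!)²` into `a_k x^{2k}/(2k+1)!`.
-/

open MeasureTheory Real

open Nat Finset

lemma summable_pow_div_factorial_sq (y : ℝ) : Summable fun k : ℕ => y ^ k / (k ! : ℝ) ^ 2 := by
  refine (Real.summable_pow_div_factorial |y|).of_norm_bounded fun k => ?_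
  rw [norm_div, norm_pow, norm_pow, Real.norm_eq_abs, Real.norm_natCast]
  gcongr
  exact le_self_pow₀ (one_le_cast.mpr k.factorial_pos) two_ne_zero

lemma hasSum_pi_fin_prod_of_nonneg {β : Type*} {f : β → ℝ} {s : ℝ} (hf : HasSum f s)
    (hf0 : 0 ≤ f) (m : ℕ) : HasSum (fun p : Fin m → β => ∏ i, f (p i)) (s ^ m) := by
  induction m with
  | zero => simp
  | succ m ih =>
    have hprod := hf.mul ih <| Summable.mul_of_nonneg (g := fun p : Fin m → β => ∏ i, f (p i))
      hf.summable ih.summable hf0 fun p => prod_nonneg fun i _ => hf0 _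
    rw [← (Fin.consEquiv fun _ => β).hasSum_iff, _root_.pow_succ']
    have hcons : ((fun p : Fin (m + 1) → β => ∏ i, f (p i)) ∘ Fin.consEquiv fun _ => β)
        = fun q : β × (Fin m → β) => f q.1 * ∏ i, f (q.2 i) := by
      funext q
      simp [Fin.prod_univ_succ, Fin.consEquiv]
    rwa [hcons]

lemma hasSum_sum_antidiagonalTuple_prod_of_nonneg {f : ℕ → ℝ} {s : ℝ} (hf : HasSum f s)
    (hf0 : 0 ≤ f) (m : ℕ) :
    HasSum (fun n => ∑ p ∈ Nat.antidiagonalTuple m n, ∏ i, f (p i)) (s ^ m) :=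
  ((Nat.sigmaAntidiagonalTupleEquivTuple m).hasSum_iff.mpr
    (hasSum_pi_fin_prod_of_nonneg hf hf0 m)).sigma fun n => (Nat.antidiagonalTuple m n).hasSum _

lemma prod_pow_div_factorial_sq {ι : Type*} [Fintype ι] (p : ι → ℕ) (y : ℝ) :
    ∏ i, y ^ p i / ((p i) ! : ℝ) ^ 2
      = (multinomial univ p : ℝ) ^ 2 * y ^ (∑ i, p i) / ((∑ i, p i) ! : ℝ) ^ 2 := by
  have hspec : (∏ i, ((p i) ! : ℝ)) * multinomial univ p = (∑ i, p i) ! := by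
    exact_mod_cast multinomial_spec univ p
  have hm : (multinomial univ p : ℝ) ≠ 0 := cast_ne_zero.mpr (multinomial_pos _ _).ne'
  rw [prod_div_distrib, prod_pow_eq_pow_sum, prod_pow, ← hspec]
  field_simp

lemma hasSum_a_mul_pow_div_factorial_sq {y : ℝ} (hy : 0 ≤ y) :
    HasSum (fun k => (a k : ℝ) * y ^ k / (k ! : ℝ) ^ 2) (g y ^ 3) := by
  convert hasSum_sum_antidiagonalTuple_prod_of_nonneg (summable_pow_div_factorial_sq y).hasSum
    (fun k => by positivity) 3 using 1
  · funext k
    rw [sum_congr rfl fun p hp => by rw [prod_pow_div_factorial_sq, Nat.mem_antidiagonalTuple.mp hp]]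
    simp only [a, cast_sum, cast_pow, sum_mul, sum_div]
  · rfl

lemma integral_pow_mul_one_sub_pow (m n : ℕ) :
    ∫ t in (0 : ℝ)..1, t ^ m * (1 - t) ^ n = (m ! * n ! : ℝ) / (m + n + 1) ! := by
  have hbeta := Complex.betaIntegral_eq_Gamma_mul_div (m + 1) (n + 1)
    (by simp; positivity) (by simp; positivity)
  have hsum : (m + 1 : ℂ) + (n + 1) = ((m + n + 1 : ℕ) : ℂ) + 1 := by push_cast; ring
  rw [hsum, Complex.Gamma_nat_eq_factorial, Complex.Gamma_nat_eq_factorial,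
    Complex.Gamma_nat_eq_factorial, Complex.betaIntegral] at hbeta
  simp only [add_sub_cancel_right, Complex.cpow_natCast] at hbeta
  rw [← Complex.ofReal_inj, ← intervalIntegral.integral_ofReal]
  push_cast
  exact hbeta

lemma integral_mul_pow_sq_mul_mul_one_sub_div_factorial_sq (c x : ℝ) (k : ℕ) :
    ∫ t in (0 : ℝ)..1, c * (x ^ 2 * t * (1 - t)) ^ k / (k ! : ℝ) ^ 2
      = c * x ^ (2 * k) / (2 * k + 1) ! := by
  have hfactor : ∀ t : ℝ, c * (x ^ 2 * t * (1 - t)) ^ k / (k ! : ℝ) ^ 2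
      = c * x ^ (2 * k) / (k ! : ℝ) ^ 2 * (t ^ k * (1 - t) ^ k) := fun t => by
    rw [mul_pow, mul_pow, ← pow_mul]; ring
  simp_rw [hfactor, intervalIntegral.integral_const_mul, integral_pow_mul_one_sub_pow, ← two_mul]
  field_simp

lemma sq_mul_mul_one_sub_mem_Icc (x : ℝ) {t : ℝ} (ht : t ∈ Set.Icc (0 : ℝ) 1) :
    x ^ 2 * t * (1 - t) ∈ Set.Icc 0 (x ^ 2 / 4) := by
  obtain ⟨ht0, ht1⟩ := ht
  constructor
  · have : 0 ≤ 1 - t := by linarith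
    positivity
  · nlinarith [mul_nonneg (sq_nonneg x) (sq_nonneg (t - 1 / 2))]

/-- `∑_{k≥0} a_k x^{2k+1}/(2k+1)! = x ∫₀¹ I₀³(2x√(t(1−t))) dt`. -/
theorem sum_a_odd_egf_eq_integral (x : ℝ) :
    HasSum (fun k : ℕ => (a k : ℝ) * x ^ (2 * k + 1) / (Nat.factorial (2 * k + 1) : ℝ))
      (x * ∫ t in (0:ℝ)..1, g (x ^ 2 * t * (1 - t)) ^ 3) := by
  have hmem : ∀ t ∈ Set.uIoc (0 : ℝ) 1, x ^ 2 * t * (1 - t) ∈ Set.Icc 0 (x ^ 2 / 4) := fun t ht =>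
    sq_mul_mul_one_sub_mem_Icc x (Set.Ioc_subset_Icc_self (by rwa [Set.uIoc_of_le zero_le_one] at ht))
  have hsum : HasSum
      (fun k => ∫ t in (0 : ℝ)..1, (a k : ℝ) * (x ^ 2 * t * (1 - t)) ^ k / (k ! : ℝ) ^ 2)
      (∫ t in (0 : ℝ)..1, g (x ^ 2 * t * (1 - t)) ^ 3) := by
    refine intervalIntegral.hasSum_integral_of_dominated_convergence
      (fun k _ => (a k : ℝ) * (x ^ 2 / 4) ^ k / (k ! : ℝ) ^ 2)
      (fun k => (by fun_prop : Continuous _).aestronglyMeasurable)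
      (fun k => .of_forall fun t ht => ?_)
      (.of_forall fun _ _ => (hasSum_a_mul_pow_div_factorial_sq (by positivity)).summable)
      intervalIntegrable_const
      (.of_forall fun t ht => hasSum_a_mul_pow_div_factorial_sq (hmem t ht).1)
    obtain ⟨hy0, hy1⟩ := hmem t ht
    rw [Real.norm_of_nonneg (by positivity)]
    gcongr
  simp only [integral_mul_pow_sq_mul_mul_one_sub_div_factorial_sq] at hsum
  have hodd : (fun k : ℕ => (a k : ℝ) * x ^ (2 * k + 1) / (2 * k + 1) !)
      = fun k => x * ((a k : ℝ) * x ^ (2 * k) / (2 * k + 1) !) := by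
    funext k; ring
  rw [hodd]
  exact hsum.mul_left x
end
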